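/- arXiv:2112.07552 — 3 statements merged into one kernel-verified Lean document; each statement's English description precedes it below -/
import Mathlib

section
/- Let V be a finite type with decidable equality; let a : Fin n → V, aval : Fin n → ℝ be the ID and Val attributes of table A, and let b : Fin m → V, bval : Fin m → ℝ be those of table B. Define mat(A) : Matrix (Fin n) V ℝ by mat(A) i v = aval i if a i = v and 0 otherwise, and mat(B) : Matrix (Fin m) V ℝ analogously with bval. Then 𝟙₁ₓₙ * mat(A) * (mat(B))ᵀ * 𝟙ₘₓ₁ (the scalar obtained by reducing the product with all-ones vectors on both sides) equals the sum of aval i * bval j over all pairs (i, j) with a i = b j; that is, it equals SELECT SUM(A.Val * B.Val) FROM A, B WHERE A.ID = B.ID. -/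
open Matrix

/-- Value-filled matrix of a table: entry `(i, v)` is `val i` if the ID attribute `f i = v`,
else `0`. -/
def valMat {n : ℕ} {V : Type*} [DecidableEq V] (f : Fin n → V) (val : Fin n → ℝ) :
    Matrix (Fin n) V ℝ :=
  fun i v => if f i = v then val i else 0

/-- The all-ones row vector of length `n`. -/
def onesRow (n : ℕ) : Matrix (Fin 1) (Fin n) ℝ := fun _ _ => 1

/-- The all-ones column vector of length `m`. -/
def onesCol (m : ℕ) : Matrix (Fin m) (Fin 1) ℝ := fun _ _ => 1

/-- `SELECT SUM(A.Val * B.Val) FROM A, B WHERE A.ID = B.ID` via matrix products: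
reducing `mat(A) * mat(B)ᵀ` with all-ones vectors on both sides gives the sum of
`aval i * bval j` over all joining pairs `(i, j)`. -/
theorem sum_over_join_eq {V : Type*} [Fintype V] [DecidableEq V] {n m : ℕ}
    (a : Fin n → V) (aval : Fin n → ℝ) (b : Fin m → V) (bval : Fin m → ℝ) :
    (onesRow n * valMat a aval * (valMat b bval)ᵀ * onesCol m) 0 0 =
      ∑ p ∈ Finset.univ.filter (fun p : Fin n × Fin m => a p.1 = b p.2),
        aval p.1 * bval p.2 := by
  rw [Finset.sum_filter, Finset.univ_product_univ.symm, Finset.sum_product]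
  simp only [Matrix.mul_apply, onesRow, onesCol, valMat, transpose_apply]
  rw [Finset.sum_comm]
  simp only [one_mul, mul_one]
  apply Finset.sum_congr rfl
  intro j _
  simp only [Finset.sum_mul, ite_mul, zero_mul]
  rw [Finset.sum_comm]
  apply Finset.sum_congr rfl
  intro i _
  by_cases h : a i = b j
  · simp [h]
  · simp [h]
    intro hv; exact absurd hv.symm h
end

section
/- Let V be a finite linearly ordered type with decidable equality and decidable order; let a : Fin n → V and b : Fin m → V be the join attributes of tables A and B. Define matₗ(a) : Matrix (Fin n) V ℕ by matₗ(a) i v = 1 if a i < v and 0 otherwise, and let mat(b) be the one-hot matrix of b. Then for all i : Fin n and j : Fin m, (matₗ(a) * (mat(b))ᵀ) i j = 1 if a i < b j and = 0 otherwise; in particular (matₗ(a) * (mat(b))ᵀ) i j > 0 if and only if a i < b j, so the matrix product computes the non-equi join with predicate A.ID < B.ID. -/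
open Matrix

/-- One-hot matrix of a function `f : Fin m → V`: entry `(j, v)` is `1` if `f j = v`, else `0`. -/
def oneHot {m : ℕ} {V : Type*} [DecidableEq V] (f : Fin m → V) : Matrix (Fin m) V ℕ :=
  fun j v => if f j = v then 1 else 0

/-- The "less-than" matrix of `a`: entry `(i, v)` is `1` if `a i < v`, else `0`. -/
def ltMat {n : ℕ} {V : Type*} [LinearOrder V] (a : Fin n → V) : Matrix (Fin n) V ℕ :=
  fun i v => if a i < v then 1 else 0

/-- Non-equi join with predicate `A.ID < B.ID` via matrix multiplication: the `(i, j)` entry of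
`matₗ(a) * mat(b)ᵀ` is `1` if `a i < b j` and `0` otherwise; in particular it is positive
iff `a i < b j`. -/
theorem nonEquiJoin_lt {V : Type*} [Fintype V] [LinearOrder V] {n m : ℕ}
    (a : Fin n → V) (b : Fin m → V) :
    ∀ (i : Fin n) (j : Fin m),
      ((ltMat a * (oneHot b)ᵀ) i j = if a i < b j then 1 else 0) ∧
      ((ltMat a * (oneHot b)ᵀ) i j > 0 ↔ a i < b j) := by
  intro i j
  have h : (ltMat a * (oneHot b)ᵀ) i j = if a i < b j then 1 else 0 := by
    simp only [Matrix.mul_apply, transpose_apply, ltMat, oneHot, ite_mul, one_mul, zero_mul,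
      mul_ite, mul_one, mul_zero]
    simp
  refine ⟨h, ?_⟩
  rw [h]
  split <;> simp_all
end

section
/- Let V be a finite type with decidable equality, let R : V → V → Prop be any decidable binary relation on V (e.g., one of <, >, ≤, ≥, ≠), and let a : Fin n → V and b : Fin m → V. Define mat_R(a) : Matrix (Fin n) V ℕ by mat_R(a) i v = 1 if R (a i) v and 0 otherwise, and let mat(b) be the one-hot matrix of b. Then for all i : Fin n and j : Fin m, (mat_R(a) * (mat(b))ᵀ) i j = 1 if R (a i) (b j) and = 0 otherwise; hence the positivity of the (i, j)-entry characterizes membership of (i, j) in the θ-join of A and B with join predicate R. -/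
open Matrix

/-- The `R`-comparison matrix of `a`: entry `(i, v)` is `1` if `R (a i) v`, else `0`. -/
def relMat {n : ℕ} {V : Type*} (R : V → V → Prop) [∀ x y, Decidable (R x y)]
    (a : Fin n → V) : Matrix (Fin n) V ℕ :=
  fun i v => if R (a i) v then 1 else 0

/-- θ-join with an arbitrary decidable predicate `R` via matrix multiplication:
the `(i, j)` entry of `mat_R(a) * mat(b)ᵀ` is `1` if `R (a i) (b j)` and `0` otherwise;
hence positivity of the entry characterizes membership in the θ-join. -/
theorem thetaJoin_rel {V : Type*} [Fintype V] [DecidableEq V]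
    (R : V → V → Prop) [∀ x y, Decidable (R x y)] {n m : ℕ}
    (a : Fin n → V) (b : Fin m → V) :
    ∀ (i : Fin n) (j : Fin m),
      ((relMat R a * (oneHot b)ᵀ) i j = if R (a i) (b j) then 1 else 0) ∧
      ((relMat R a * (oneHot b)ᵀ) i j > 0 ↔ R (a i) (b j)) := by
  intro i j
  have key : (relMat R a * (oneHot b)ᵀ) i j = if R (a i) (b j) then 1 else 0 := by
    simp only [Matrix.mul_apply, Matrix.transpose_apply, relMat, oneHot]
    rw [Finset.sum_eq_single (b j)]
    · simp
    · intro v _ hv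
      simp [Ne.symm hv]
    · simp
  refine ⟨key, ?_⟩
  rw [key]
  split <;> simp_all
end
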